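/- In the setting of the rank-zero algebra 𝔤 = 𝔯_𝒱 of the previous statement (dim V = 2p, p ≥ 2, generic flag with odd-dimensional steps), with H = Σ_{i=1}^{p} H_i, one has [H, W_l] = 2W_l for each 1 ≤ l ≤ p−1; consequently [𝔤, 𝔤(g)] ∩ 𝔤(g) ≠ {0}, so g is not a stable linear form. -/

import Mathlib

open Module LinearMap

namespace Paper

attribute [local instance 100] LieRing.ofAssociativeRing

variable (K : Type*) [Field K] [IsAlgClosed K] [CharZero K]

/-- Elementary matrix `E_{a,b}` (with `ℕ` indices; zero if out of range). -/
def Eij (N a b : ℕ) : Matrix (Fin N) (Fin N) K :=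
  Matrix.of fun i k => if (i : ℕ) = a ∧ (k : ℕ) = b then 1 else 0

variable (p : ℕ)

/-- `H_j = E_{2j-1,2j-1} − E_{2j,2j}` (0-indexed). -/
def Hgen (N j : ℕ) : Matrix (Fin N) (Fin N) K :=
  Eij K N (2 * j) (2 * j) - Eij K N (2 * j + 1) (2 * j + 1)

/-- `Z_j = 2E_{2j-1,2j}` (0-indexed). -/
def Zgen (N j : ℕ) : Matrix (Fin N) (Fin N) K :=
  (2 : K) • Eij K N (2 * j) (2 * j + 1)

/-- `T_j = E_{2j-1,2j+2} + E_{2j+1,2j}` (0-indexed). -/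
def Tgen (N j : ℕ) : Matrix (Fin N) (Fin N) K :=
  Eij K N (2 * j) (2 * j + 3) + Eij K N (2 * j + 2) (2 * j + 1)

/-- The Lie algebra `𝔤 = 𝔯_𝒱 = 𝔩 ⊕ 𝔫`, spanned by the `H_j, Z_j (j < p)` and the
`T_j (j < p−1)`, inside `𝔤𝔩(2p, K)`. -/
def rEven : Submodule K (Matrix (Fin (2 * p)) (Fin (2 * p)) K) :=
  Submodule.span K
    ({M | ∃ j < p, M = Hgen K (2 * p) j} ∪ {M | ∃ j < p, M = Zgen K (2 * p) j} ∪
      {M | ∃ j < p - 1, M = Tgen K (2 * p) j})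

/-- `W_i = T_i − (τ_i/2)(Z_i/ζ_i + Z_{i+1}/ζ_{i+1})`. -/
def Wgen (N : ℕ) (ζ τ : ℕ → K) (i : ℕ) : Matrix (Fin N) (Fin N) K :=
  Tgen K N i - (τ i / (2 * ζ i)) • Zgen K N i - (τ i / (2 * ζ (i + 1))) • Zgen K N (i + 1)

section
variable {K : Type*} [Field K] {M : Type*} [LieRing M] [LieAlgebra K M]

/-- The stabilizer, inside a subalgebra `𝔞` (given as a submodule), of the restriction
of a linear form `g`. -/
def stabIn (𝔞 : Submodule K M) (g : Module.Dual K M) : Submodule K M where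
  carrier := {X | X ∈ 𝔞 ∧ ∀ Y ∈ 𝔞, g ⁅X, Y⁆ = 0}
  add_mem' := by
    rintro a b ⟨ha, ha'⟩ ⟨hb, hb'⟩
    exact ⟨𝔞.add_mem ha hb, fun Y hY => by
      rw [add_lie, map_add, ha' Y hY, hb' Y hY, add_zero]⟩
  zero_mem' := ⟨𝔞.zero_mem, fun Y _ => by rw [zero_lie, map_zero]⟩
  smul_mem' := by
    rintro c a ⟨ha, ha'⟩
    exact ⟨𝔞.smul_mem c ha, fun Y hY => by
      rw [smul_lie, map_smul, ha' Y hY, smul_zero]⟩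

end

/-!
Each `Hⱼ` is diagonal, so `ad Hⱼ` scales the matrix unit `E_{2a,2b+1}` by `δ_{ja} + δ_{jb}`;
summed over `j`, `ad H` acts by `2` on all of them. The `Zⱼ`, `Tⱼ`, hence the `Wₗ`, are
combinations of such units, whence `[H, Wₗ] = 2Wₗ`. The same units multiply to zero, so
`𝔫` is abelian, and the coefficients of `Wₗ` are chosen so that `g [Hⱼ, Wₗ] = 0`; thus
`Wₗ ∈ 𝔤(g)`, and `2W₀ = [H, W₀]` is a nonzero element of `[𝔤, 𝔤(g)] ∩ 𝔤(g)`.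
-/

section Stabilizer

variable {K : Type*} [Field K] {L : Type*} [LieRing L] [LieAlgebra K L]

theorem mem_stabIn_span {S : Set L} {g : Module.Dual K L} {X : L}
    (hX : X ∈ Submodule.span K S) (h : ∀ Y ∈ S, g ⁅X, Y⁆ = 0) :
    X ∈ stabIn (Submodule.span K S) g := by
  refine ⟨hX, fun Y hY => ?_⟩
  have hle : Submodule.span K S ≤ LinearMap.ker (g ∘ₗ LieAlgebra.ad K L X) :=
    Submodule.span_le.mpr fun Y hY => by simpa using h Y hY
  simpa using hle hY

theorem span_lie_inf_stabIn_ne_bot {𝔞 : Submodule K L} {g : Module.Dual K L} {X Y : L}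
    {c : K} (hX : X ∈ 𝔞) (hY : Y ∈ stabIn 𝔞 g) (hY₀ : Y ≠ 0) (hc : c ≠ 0)
    (hXY : ⁅X, Y⁆ = c • Y) :
    Submodule.span K {M | ∃ X ∈ 𝔞, ∃ Y ∈ stabIn 𝔞 g, M = ⁅X, Y⁆} ⊓ stabIn 𝔞 g ≠ ⊥ :=
  (Submodule.ne_bot_iff _).mpr ⟨c • Y,
    Submodule.mem_inf.mpr ⟨Submodule.subset_span ⟨X, hX, Y, hY, hXY.symm⟩,
      Submodule.smul_mem _ c hY⟩,
    smul_ne_zero hc hY₀⟩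

end Stabilizer

section MatrixUnits

variable {K : Type*} [Field K] {N : ℕ}

theorem Eij_mul_Eij_of_ne {a b c d : ℕ} (h : b ≠ c) : Eij K N a b * Eij K N c d = 0 := by
  ext i k
  simp only [Matrix.mul_apply, Eij, Matrix.of_apply, Matrix.zero_apply]
  refine Finset.sum_eq_zero fun j _ => ?_
  by_cases hj : (j : ℕ) = b
  · simp [hj, h]
  · simp [hj]

theorem lie_Eij_Eij_of_ne {a b c d : ℕ} (hbc : b ≠ c) (hda : d ≠ a) :
    ⁅Eij K N a b, Eij K N c d⁆ = 0 := by
  rw [Ring.lie_def, Eij_mul_Eij_of_ne hbc, Eij_mul_Eij_of_ne hda, sub_zero]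

theorem lie_diagonal_Eij (d : ℕ → K) (a b : ℕ) :
    ⁅Matrix.diagonal fun k : Fin N => d k, Eij K N a b⁆ = (d a - d b) • Eij K N a b := by
  ext i k
  simp only [Ring.lie_def, Matrix.sub_apply, Matrix.diagonal_mul, Matrix.mul_diagonal,
    Matrix.smul_apply, Eij, Matrix.of_apply, smul_eq_mul]
  split_ifs with h
  · rw [h.1, h.2]; ring
  · ring

theorem Hgen_eq_diagonal (j : ℕ) :
    Hgen K N j = Matrix.diagonal fun k : Fin N =>
      (if (k : ℕ) = 2 * j then 1 else 0) - (if (k : ℕ) = 2 * j + 1 then 1 else 0) := by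
  ext i k
  by_cases hik : i = k
  · subst hik
    simp [Hgen, Eij]
  · have hik' := Fin.val_ne_of_ne hik
    rw [Matrix.diagonal_apply_ne _ hik]
    simp only [Hgen, Eij, Matrix.sub_apply, Matrix.of_apply]
    split_ifs <;> first | omega | simp

theorem lie_Hgen_Eij (j a b : ℕ) :
    ⁅Hgen K N j, Eij K N (2 * a) (2 * b + 1)⁆ =
      ((if j = a then (1 : K) else 0) + (if j = b then 1 else 0)) •
        Eij K N (2 * a) (2 * b + 1) := by
  rw [Hgen_eq_diagonal, lie_diagonal_Eij (fun k =>
    (if k = 2 * j then 1 else 0) - (if k = 2 * j + 1 then 1 else 0))]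
  congr 1
  split_ifs <;> first | omega | norm_num

theorem lie_Hgen_Zgen (j l : ℕ) :
    ⁅Hgen K N j, Zgen K N l⁆ = (if j = l then (2 : K) else 0) • Zgen K N l := by
  rw [Zgen, lie_smul, lie_Hgen_Eij, smul_comm]
  congr 1
  split_ifs <;> norm_num

theorem lie_Hgen_Tgen (j l : ℕ) :
    ⁅Hgen K N j, Tgen K N l⁆ =
      ((if j = l then (1 : K) else 0) + (if j = l + 1 then 1 else 0)) • Tgen K N l := by
  have h₁ : Eij K N (2 * l) (2 * l + 3) = Eij K N (2 * l) (2 * (l + 1) + 1) := rfl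
  have h₂ : Eij K N (2 * l + 2) (2 * l + 1) = Eij K N (2 * (l + 1)) (2 * l + 1) := rfl
  rw [Tgen, h₁, h₂, lie_add, lie_Hgen_Eij, lie_Hgen_Eij, add_comm (if j = l + 1 then _ else _),
    smul_add]

theorem lie_Wgen_Zgen (ζ τ : ℕ → K) (i j : ℕ) : ⁅Wgen K N ζ τ i, Zgen K N j⁆ = 0 := by
  simp (disch := omega) only [Wgen, Tgen, Zgen, sub_lie, add_lie, smul_lie, lie_smul,
    lie_Eij_Eij_of_ne, smul_zero, sub_zero, add_zero]

theorem lie_Wgen_Tgen (ζ τ : ℕ → K) (i j : ℕ) : ⁅Wgen K N ζ τ i, Tgen K N j⁆ = 0 := by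
  simp (disch := omega) only [Wgen, Tgen, Zgen, sub_lie, add_lie, lie_add, smul_lie,
    lie_Eij_Eij_of_ne, smul_zero, sub_zero, add_zero]

theorem lie_sum_Hgen_Zgen {p l : ℕ} (hl : l < p) :
    ⁅∑ j ∈ Finset.range p, Hgen K N j, Zgen K N l⁆ = (2 : K) • Zgen K N l := by
  simp only [sum_lie, lie_Hgen_Zgen, ← Finset.sum_smul, Finset.sum_ite_eq',
    Finset.mem_range, hl, if_true]

theorem lie_sum_Hgen_Tgen {p l : ℕ} (hl : l + 1 < p) :
    ⁅∑ j ∈ Finset.range p, Hgen K N j, Tgen K N l⁆ = (2 : K) • Tgen K N l := by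
  simp only [sum_lie, lie_Hgen_Tgen, ← Finset.sum_smul, Finset.sum_add_distrib,
    Finset.sum_ite_eq', Finset.mem_range, hl, (by omega : l < p), if_true]
  norm_num

theorem lie_sum_Hgen_Wgen {p : ℕ} (ζ τ : ℕ → K) {l : ℕ} (hl : l + 1 < p) :
    ⁅∑ j ∈ Finset.range p, Hgen K N j, Wgen K N ζ τ l⁆ = (2 : K) • Wgen K N ζ τ l := by
  rw [Wgen, lie_sub, lie_sub, lie_smul, lie_smul, lie_sum_Hgen_Tgen hl,
    lie_sum_Hgen_Zgen (by omega), lie_sum_Hgen_Zgen hl]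
  module

theorem apply_lie_Hgen_Wgen [NeZero (2 : K)] {g : Module.Dual K (Matrix (Fin N) (Fin N) K)}
    {ζ τ : ℕ → K} {i : ℕ} (hT : g (Tgen K N i) = τ i) (hZ : g (Zgen K N i) = ζ i)
    (hZ' : g (Zgen K N (i + 1)) = ζ (i + 1)) (hζ : ζ i ≠ 0) (hζ' : ζ (i + 1) ≠ 0) (j : ℕ) :
    g ⁅Hgen K N j, Wgen K N ζ τ i⁆ = 0 := by
  rw [Wgen, lie_sub, lie_sub, lie_smul, lie_smul, lie_Hgen_Tgen, lie_Hgen_Zgen, lie_Hgen_Zgen]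
  simp only [map_sub, map_smul, hT, hZ, hZ', smul_eq_mul]
  split_ifs <;> first | omega | (field_simp; ring)

theorem Wgen_ne_zero (ζ τ : ℕ → K) {i : ℕ} (hi : 2 * i + 3 < N) : Wgen K N ζ τ i ≠ 0 := by
  intro h
  have h₀ := congrFun (congrFun h ⟨2 * i, by omega⟩) ⟨2 * i + 3, hi⟩
  simp [Wgen, Tgen, Zgen, Eij] at h₀

end MatrixUnits

section EvenCase

variable {K : Type*} [Field K] {p : ℕ}

theorem Hgen_mem_rEven {j : ℕ} (hj : j < p) : Hgen K (2 * p) j ∈ rEven K p :=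
  Submodule.subset_span (Or.inl (Or.inl ⟨j, hj, rfl⟩))

theorem Zgen_mem_rEven {j : ℕ} (hj : j < p) : Zgen K (2 * p) j ∈ rEven K p :=
  Submodule.subset_span (Or.inl (Or.inr ⟨j, hj, rfl⟩))

theorem Tgen_mem_rEven {j : ℕ} (hj : j < p - 1) : Tgen K (2 * p) j ∈ rEven K p :=
  Submodule.subset_span (Or.inr ⟨j, hj, rfl⟩)

theorem sum_Hgen_mem_rEven : ∑ j ∈ Finset.range p, Hgen K (2 * p) j ∈ rEven K p :=
  Submodule.sum_mem _ fun _ hj => Hgen_mem_rEven (Finset.mem_range.mp hj)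

theorem Wgen_mem_rEven (ζ τ : ℕ → K) {i : ℕ} (hi : i + 1 < p) :
    Wgen K (2 * p) ζ τ i ∈ rEven K p :=
  Submodule.sub_mem _
    (Submodule.sub_mem _ (Tgen_mem_rEven (by omega))
      (Submodule.smul_mem _ _ (Zgen_mem_rEven (by omega))))
    (Submodule.smul_mem _ _ (Zgen_mem_rEven hi))

theorem Wgen_mem_stabIn [NeZero (2 : K)]
    {g : Module.Dual K (Matrix (Fin (2 * p)) (Fin (2 * p)) K)} {ζ τ : ℕ → K} {i : ℕ}
    (hi : i + 1 < p) (hZ : ∀ j < p, g (Zgen K (2 * p) j) = ζ j) (hζ : ∀ j < p, ζ j ≠ 0)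
    (hT : g (Tgen K (2 * p) i) = τ i) :
    Wgen K (2 * p) ζ τ i ∈ stabIn (rEven K p) g := by
  refine mem_stabIn_span (Wgen_mem_rEven ζ τ hi) ?_
  rintro Y ((⟨j, -, rfl⟩ | ⟨j, -, rfl⟩) | ⟨j, -, rfl⟩)
  · rw [← lie_skew, map_neg, apply_lie_Hgen_Wgen hT (hZ i (by omega)) (hZ (i + 1) hi)
      (hζ i (by omega)) (hζ (i + 1) hi), neg_zero]
  · rw [lie_Wgen_Zgen, map_zero]
  · rw [lie_Wgen_Tgen, map_zero]

end EvenCase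

theorem not_stable_even_case (hp : 2 ≤ p)
    (g : Module.Dual K (Matrix (Fin (2 * p)) (Fin (2 * p)) K)) (ζ τ : ℕ → K)
    (hZ : ∀ j < p, g (Zgen K (2 * p) j) = ζ j) (hζ : ∀ j < p, ζ j ≠ 0)
    (hT : ∀ j < p - 1, g (Tgen K (2 * p) j) = τ j) :
    (∀ l < p - 1,
      ⁅∑ i ∈ Finset.range p, Hgen K (2 * p) i, Wgen K (2 * p) ζ τ l⁆ =
        (2 : K) • Wgen K (2 * p) ζ τ l) ∧
      Submodule.span K
          {M | ∃ X ∈ rEven K p, ∃ Y ∈ stabIn (rEven K p) g, M = ⁅X, Y⁆} ⊓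
        stabIn (rEven K p) g ≠ ⊥ := by
  refine ⟨fun l hl => lie_sum_Hgen_Wgen ζ τ (by omega), ?_⟩
  have hW₀ : Wgen K (2 * p) ζ τ 0 ∈ stabIn (rEven K p) g :=
    Wgen_mem_stabIn (by omega) hZ hζ (hT 0 (by omega))
  exact span_lie_inf_stabIn_ne_bot sum_Hgen_mem_rEven hW₀ (Wgen_ne_zero ζ τ (by omega))
    two_ne_zero (lie_sum_Hgen_Wgen ζ τ (by omega))

end Paper
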